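/- Let a(x) = a_0(x^Δ) and b(x) = b_0(x^Δ) in F_q[x]/(x^ℓ - 1) where ℓ = ℓ_0·Δ. Then F_q[x]/(x^ℓ-1) decomposes the GB code GB(a,b) as a direct sum: the coordinates split into Δ residue classes mod Δ, and on each class the check equations are exactly those of GB(a_0, b_0) with circulant size ℓ_0. Consequently, the code dimension satisfies k = Δ·k_0 and the minimum distance satisfies d = d_0, where [[2ℓ_0, k_0, d_0]] are the parameters of GB(a_0, b_0). -/

import Mathlib

open Polynomial Matrix

/-- The `ℓ × ℓ` cyclic permutation matrix `P` with `P eᵢ = e_{i+1 mod ℓ}`. -/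
def cyclicP (F : Type*) [Semiring F] (n : ℕ) [NeZero n] : Matrix (Fin n) (Fin n) F :=
  Matrix.of fun i j => if i = j + 1 then 1 else 0

/-- Hamming weight of a vector. -/
noncomputable def hWt {n F : Type*} [Zero F] (c : n → F) : ℕ := Set.ncard {i | c i ≠ 0}

/-- The X-check matrix `H_X = (a(P) | b(P))` of the GB code `GB(a,b)`. -/
noncomputable def GBHX (F : Type*) [Field F] (ℓ : ℕ) [NeZero ℓ] (a b : Polynomial F) :
    Matrix (Fin ℓ) (Fin ℓ ⊕ Fin ℓ) F :=
  Matrix.fromCols (Polynomial.aeval (cyclicP F ℓ) a) (Polynomial.aeval (cyclicP F ℓ) b)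

/-- The Z-check matrix `H_Z = (b(P)ᵀ | -a(P)ᵀ)` of the GB code `GB(a,b)`. -/
noncomputable def GBHZ (F : Type*) [Field F] (ℓ : ℕ) [NeZero ℓ] (a b : Polynomial F) :
    Matrix (Fin ℓ) (Fin ℓ ⊕ Fin ℓ) F :=
  Matrix.fromCols ((Polynomial.aeval (cyclicP F ℓ) b)ᵀ) (-(Polynomial.aeval (cyclicP F ℓ) a)ᵀ)

/-- Minimum distance of the CSS code with check matrices `H_X`, `H_Z`: the least Hamming
weight of a vector that satisfies all checks of one type but is not a linear combination
of the rows of the corresponding check matrix. -/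
noncomputable def distCSS {F : Type*} [Field F] {q m1 m2 : Type*} [Fintype q]
    (HX : Matrix m1 q F) (HZ : Matrix m2 q F) : ℕ :=
  sInf ({w | ∃ c : q → F, HX.mulVec c = 0 ∧
          c ∉ Submodule.span F (Set.range fun i => HZ i) ∧ w = hWt c} ∪
        {w | ∃ c : q → F, HZ.mulVec c = 0 ∧
          c ∉ Submodule.span F (Set.range fun i => HX i) ∧ w = hWt c})

/-- Number of logical qudits of the GB code `GB(a,b)`. -/
noncomputable def gbDim (F : Type*) [Field F] (ℓ : ℕ) [NeZero ℓ] (a b : Polynomial F) : ℕ :=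
  2 * ℓ - (GBHX F ℓ a b).rank - (GBHZ F ℓ a b).rank

/-- Minimum distance of the GB code `GB(a,b)`. -/
noncomputable def gbDist (F : Type*) [Field F] (ℓ : ℕ) [NeZero ℓ] (a b : Polynomial F) : ℕ :=
  distCSS (GBHX F ℓ a b) (GBHZ F ℓ a b)

/-!
Write the index `i ∈ Fin (ℓ₀Δ)` as `i = r + Δq` with `(q, r) ∈ Fin ℓ₀ × Fin Δ`
(`finProdFinEquiv`), so that `r` is the residue class of `i` mod `Δ`. Adding `Δ` to `i` adds `1`
to `q` and fixes `r`, so after this regrouping `P^Δ` is block diagonal with `Δ` copies of the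
`ℓ₀ × ℓ₀` cyclic shift. Hence so are `a(P) = a₀(P^Δ)`, `b(P)` and both check matrices. Ranks of
block diagonal matrices add, giving `k = Δ k₀`. A logical operator of the big code has some block
that is a logical operator of `GB(a₀, b₀)`, of no larger weight, and a logical operator of
`GB(a₀, b₀)` placed in a single block is one of the big code, giving `d = d₀`.
-/

open Fin.NatCast in
theorem cyclicP_pow (F : Type*) [Semiring F] (n : ℕ) [NeZero n] (d : ℕ) :
    cyclicP F n ^ d = Matrix.of fun i j => if i = j + (d : Fin n) then 1 else 0 := by
  induction d with
  | zero => ext i j; simp [Matrix.one_apply]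
  | succ d ih =>
    ext i j
    rw [pow_succ, ih]
    simp [Matrix.mul_apply, cyclicP, add_assoc, add_comm (1 : Fin n)]

open Fin.NatCast in
theorem finProdFinEquiv_add_natCast (ℓ0 Δ : ℕ) [NeZero ℓ0] [NeZero (ℓ0 * Δ)]
    (q : Fin ℓ0) (r : Fin Δ) :
    finProdFinEquiv (q, r) + (Δ : Fin (ℓ0 * Δ)) = finProdFinEquiv (q + 1, r) := by
  ext
  simp only [Fin.val_add, finProdFinEquiv_apply_val, Fin.val_natCast, Nat.add_mod_mod,
    Fin.val_one']
  rw [Nat.mul_comm ℓ0, Nat.mod_mul, show (r : ℕ) + Δ * q + Δ = r + Δ * (q + 1) by ring,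
    Nat.add_mul_mod_self_left, Nat.add_mul_div_left _ _ r.pos, Nat.mod_eq_of_lt r.isLt,
    Nat.div_eq_of_lt r.isLt, Nat.zero_add]

theorem submatrix_cyclicP_pow (F : Type*) [Semiring F] (ℓ0 Δ : ℕ) [NeZero ℓ0]
    [NeZero (ℓ0 * Δ)] :
    (cyclicP F (ℓ0 * Δ) ^ Δ).submatrix finProdFinEquiv finProdFinEquiv =
      blockDiagonal fun _ : Fin Δ => cyclicP F ℓ0 := by
  ext ⟨q, r⟩ ⟨q', r'⟩
  rw [cyclicP_pow, submatrix_apply, of_apply, finProdFinEquiv_add_natCast]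
  by_cases hr : r = r' <;> simp [cyclicP, blockDiagonal_apply, hr]

def blockDiagonalConstAlgHom (R : Type*) [CommSemiring R] (m α : Type*) [Fintype m]
    [DecidableEq m] [Fintype α] [DecidableEq α] :
    Matrix m m R →ₐ[R] Matrix (m × α) (m × α) R :=
  { (blockDiagonalRingHom m α R).comp (Pi.constRingHom α _) with
    commutes' := fun c => by
      ext ⟨i, k⟩ ⟨j, k'⟩
      by_cases hk : k = k' <;> by_cases hij : i = j <;>
        simp [blockDiagonal_apply, algebraMap_matrix_apply, hk, hij] }

@[simp]
theorem blockDiagonalConstAlgHom_apply (R : Type*) [CommSemiring R] (m α : Type*) [Fintype m]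
    [DecidableEq m] [Fintype α] [DecidableEq α] (A : Matrix m m R) :
    blockDiagonalConstAlgHom R m α A = blockDiagonal fun _ => A := rfl

theorem submatrix_aeval_comp_X_pow (F : Type*) [CommRing F] (ℓ0 Δ : ℕ) [NeZero ℓ0]
    [NeZero (ℓ0 * Δ)] (p : F[X]) :
    (aeval (cyclicP F (ℓ0 * Δ)) (p.comp (X ^ Δ))).submatrix finProdFinEquiv finProdFinEquiv =
      blockDiagonal fun _ : Fin Δ => aeval (cyclicP F ℓ0) p := by
  have reindex_eq (M : Matrix (Fin (ℓ0 * Δ)) (Fin (ℓ0 * Δ)) F) :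
      M.submatrix finProdFinEquiv finProdFinEquiv =
        reindexAlgEquiv F F finProdFinEquiv.symm M := rfl
  rw [aeval_comp, map_pow, aeval_X, reindex_eq, ← aeval_algHom_apply, ← reindex_eq,
    submatrix_cyclicP_pow, ← blockDiagonalConstAlgHom_apply, aeval_algHom_apply]
  rfl

def sumProdDistribCongr {n0 α n : Type*} (f : n0 × α ≃ n) : (n0 ⊕ n0) × α ≃ n ⊕ n :=
  (Equiv.sumProdDistrib n0 n0 α).trans (Equiv.sumCongr f f)

theorem submatrix_fromCols_eq_blockDiagonal {R m n m0 n0 α : Type*} [Zero R] [DecidableEq α]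
    {A B : Matrix m n R} {A0 B0 : α → Matrix m0 n0 R} (e : m0 × α ≃ m) (f : n0 × α ≃ n)
    (hA : A.submatrix e f = blockDiagonal A0) (hB : B.submatrix e f = blockDiagonal B0) :
    (fromCols A B).submatrix e (sumProdDistribCongr f) =
      blockDiagonal fun k => fromCols (A0 k) (B0 k) := by
  ext ⟨i, k⟩ ⟨j | j, k'⟩
  · simpa [sumProdDistribCongr, blockDiagonal_apply] using congr_fun₂ hA (i, k) (j, k')
  · simpa [sumProdDistribCongr, blockDiagonal_apply] using congr_fun₂ hB (i, k) (j, k')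

section GB

variable (F : Type*) [Field F] (ℓ0 Δ : ℕ) [NeZero ℓ0] [NeZero (ℓ0 * Δ)] (a0 b0 : F[X])

theorem submatrix_GBHX_comp_X_pow :
    (GBHX F (ℓ0 * Δ) (a0.comp (X ^ Δ)) (b0.comp (X ^ Δ))).submatrix finProdFinEquiv
        (sumProdDistribCongr finProdFinEquiv) =
      blockDiagonal fun _ : Fin Δ => GBHX F ℓ0 a0 b0 :=
  submatrix_fromCols_eq_blockDiagonal _ _ (submatrix_aeval_comp_X_pow F ℓ0 Δ a0)
    (submatrix_aeval_comp_X_pow F ℓ0 Δ b0)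

theorem submatrix_GBHZ_comp_X_pow :
    (GBHZ F (ℓ0 * Δ) (a0.comp (X ^ Δ)) (b0.comp (X ^ Δ))).submatrix finProdFinEquiv
        (sumProdDistribCongr finProdFinEquiv) =
      blockDiagonal fun _ : Fin Δ => GBHZ F ℓ0 a0 b0 := by
  have submatrix_transpose (p : F[X]) :
      (aeval (cyclicP F (ℓ0 * Δ)) (p.comp (X ^ Δ)))ᵀ.submatrix finProdFinEquiv finProdFinEquiv =
        blockDiagonal fun _ : Fin Δ => (aeval (cyclicP F ℓ0) p)ᵀ := by
    rw [← transpose_submatrix, submatrix_aeval_comp_X_pow, blockDiagonal_transpose]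
  exact submatrix_fromCols_eq_blockDiagonal _ _ (submatrix_transpose b0)
    ((congrArg Neg.neg (submatrix_transpose a0)).trans (blockDiagonal_neg _).symm)

end GB

section BlockDiagonal

variable {K : Type*} [Semiring K] {m n α : Type*}

def blockRestrict (K : Type*) [Semiring K] {n α : Type*} (k : α) : ((n × α) → K) →ₗ[K] (n → K) :=
  LinearMap.funLeft K K fun j => (j, k)

@[simp]
theorem blockRestrict_apply (k : α) (c : (n × α) → K) (j : n) :
    blockRestrict K k c j = c (j, k) := rfl

def blockExtend (K : Type*) [Semiring K] {n α : Type*} [DecidableEq α] (k : α) :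
    (n → K) →ₗ[K] ((n × α) → K) where
  toFun v p := if p.2 = k then v p.1 else 0
  map_add' v w := by ext p; by_cases h : p.2 = k <;> simp [h]
  map_smul' t v := by ext p; by_cases h : p.2 = k <;> simp [h]

variable [DecidableEq α]

@[simp]
theorem blockExtend_apply (k : α) (v : n → K) (p : n × α) :
    blockExtend K k v p = if p.2 = k then v p.1 else 0 := rfl

theorem blockRestrict_blockExtend (k k' : α) (v : n → K) :
    blockRestrict K k' (blockExtend K k v) = if k' = k then v else 0 := by
  ext j; by_cases h : k' = k <;> simp [h]

theorem blockRestrict_blockDiagonal_row (M : α → Matrix m n K) (i : m) (k k' : α) :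
    blockRestrict K k' (blockDiagonal M (i, k)) = if k' = k then M k i else 0 := by
  ext j; obtain rfl | h := eq_or_ne k' k
  · simp [blockDiagonal_apply]
  · simp [blockDiagonal_apply, h, h.symm]

theorem blockExtend_row (M : α → Matrix m n K) (k : α) (i : m) :
    blockExtend K k (M k i) = blockDiagonal M (i, k) := by
  ext ⟨j, k'⟩; obtain rfl | h := eq_or_ne k' k
  · simp [blockDiagonal_apply]
  · simp [blockDiagonal_apply, h, h.symm]

theorem sum_blockExtend_blockRestrict [Fintype α] (c : (n × α) → K) :
    ∑ k, blockExtend K k (blockRestrict K k c) = c := by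
  ext ⟨j, k'⟩; simp [Finset.sum_apply]

theorem mem_span_rows_blockDiagonal_iff [Fintype α] (M : α → Matrix m n K) (c : (n × α) → K) :
    c ∈ Submodule.span K (Set.range (blockDiagonal M)) ↔
      ∀ k, blockRestrict K k c ∈ Submodule.span K (Set.range (M k)) := by
  constructor
  · intro hc k
    refine (Submodule.span_le (p := (Submodule.span K (Set.range (M k))).comap _)).2 ?_ hc
    rintro _ ⟨⟨i, k'⟩, rfl⟩
    simp only [SetLike.mem_coe, Submodule.mem_comap, blockRestrict_blockDiagonal_row]
    split_ifs with h
    · subst h; exact Submodule.subset_span ⟨i, rfl⟩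
    · exact zero_mem _
  · intro h
    rw [← sum_blockExtend_blockRestrict c]
    refine Submodule.sum_mem _ fun k _ => ?_
    refine (Submodule.span_le
      (p := (Submodule.span K (Set.range (blockDiagonal M))).comap (blockExtend K k))).2 ?_ (h k)
    rintro _ ⟨i, rfl⟩
    exact Submodule.subset_span ⟨(i, k), (blockExtend_row M k i).symm⟩

theorem blockDiagonal_mulVec_apply [Fintype n] [Fintype α] (M : α → Matrix m n K)
    (v : (n × α) → K) (i : m) (k : α) :
    (blockDiagonal M *ᵥ v) (i, k) = (M k *ᵥ blockRestrict K k v) i := by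
  simp [mulVec, dotProduct, Fintype.sum_prod_type_right, blockDiagonal_apply]

theorem blockDiagonal_mulVec_eq_zero_iff [Fintype n] [Fintype α] (M : α → Matrix m n K)
    (v : (n × α) → K) : blockDiagonal M *ᵥ v = 0 ↔ ∀ k, M k *ᵥ blockRestrict K k v = 0 := by
  simp only [funext_iff, Prod.forall, blockDiagonal_mulVec_apply, Pi.zero_apply]
  exact forall_comm

end BlockDiagonal

def piUnivSubmoduleEquiv {R ι : Type*} [Semiring R] {M : ι → Type*}
    [∀ k, AddCommMonoid (M k)] [∀ k, Module R (M k)] (p : ∀ k, Submodule R (M k)) :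
    Submodule.pi Set.univ p ≃ₗ[R] ∀ k, p k where
  toFun x k := ⟨x.1 k, x.2 k (Set.mem_univ k)⟩
  invFun v := ⟨fun k => v k, fun k _ => (v k).2⟩
  map_add' _ _ := rfl
  map_smul' _ _ := rfl
  left_inv _ := rfl
  right_inv _ := rfl

section Rank

variable {K : Type*} [Field K] {m n α : Type*} [Fintype m] [Fintype n] [Fintype α]
  [DecidableEq α]

theorem rank_blockDiagonal (M : α → Matrix m n K) :
    (blockDiagonal M).rank = ∑ k, (M k).rank := by
  let blocks : ((n × α) → K) ≃ₗ[K] (α → n → K) :=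
    (LinearEquiv.funCongrLeft K K (Equiv.prodComm α n)).trans (LinearEquiv.curry K K α n)
  have span_eq : Submodule.span K (Set.range (blockDiagonal M).row) =
      (Submodule.pi Set.univ fun k => Submodule.span K (Set.range (M k))).comap
        (blocks : (n × α → K) →ₗ[K] α → n → K) := by
    ext c
    refine (mem_span_rows_blockDiagonal_iff M c).trans ?_
    simp only [Submodule.mem_comap, Submodule.mem_pi, Set.mem_univ, true_implies]
    rfl
  rw [rank_eq_finrank_span_row, span_eq, Submodule.comap_equiv_eq_map_symm,
    LinearEquiv.finrank_map_eq, (piUnivSubmoduleEquiv _).finrank_eq, Module.finrank_pi_fintype]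
  simp_rw [rank_eq_finrank_span_row]
  rfl

theorem rank_blockDiagonal_const (A : Matrix m n K) :
    (blockDiagonal fun _ : α => A).rank = Fintype.card α * A.rank := by
  simp [rank_blockDiagonal]

end Rank

theorem hWt_comp_equiv {M n β : Type*} [Zero M] (e : β ≃ n) (c : n → M) : hWt (c ∘ e) = hWt c :=
  Set.ncard_preimage_of_injective_subset_range (s := {i | c i ≠ 0}) e.injective (by simp)

section Weight

variable {K : Type*} [Semiring K] {n α : Type*}

theorem hWt_blockExtend [DecidableEq α] (k : α) (v : n → K) :
    hWt (blockExtend K k v) = hWt v := by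
  have support_eq : {p : n × α | blockExtend K k v p ≠ 0} = (·, k) '' {j | v j ≠ 0} := by
    ext ⟨j, k'⟩
    obtain rfl | h := eq_or_ne k' k
    · simp
    · simp [h, h.symm]
  rw [hWt, support_eq, Set.ncard_image_of_injective _ fun _ _ h => congrArg Prod.fst h]
  rfl

theorem hWt_blockRestrict_le [Finite n] [Finite α] (k : α) (c : (n × α) → K) :
    hWt (blockRestrict K k c) ≤ hWt c :=
  Set.ncard_le_ncard_of_injOn (·, k) (fun _ h => h) (fun _ _ _ _ h => congrArg Prod.fst h)

end Weight

section Distance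

variable {K : Type*} [Field K] {q q' m1 m2 m1' m2' : Type*} [Fintype q] [Fintype q']

def logicalWeights (A : Matrix m1 q K) (B : Matrix m2 q K) : Set ℕ :=
  {w | ∃ c : q → K, A *ᵥ c = 0 ∧ c ∉ Submodule.span K (Set.range fun i => B i) ∧ w = hWt c}

theorem distCSS_eq_sInf (HX : Matrix m1 q K) (HZ : Matrix m2 q K) :
    distCSS HX HZ = sInf (logicalWeights HX HZ ∪ logicalWeights HZ HX) := rfl

theorem logicalWeights_submatrix (A : Matrix m1 q K) (B : Matrix m2 q K) (eA : m1' ≃ m1)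
    (eB : m2' ≃ m2) (e : q' ≃ q) :
    logicalWeights (A.submatrix eA e) (B.submatrix eB e) = logicalWeights A B := by
  let T : (q → K) ≃ₗ[K] (q' → K) := LinearEquiv.funCongrLeft K K e
  have rows_eq : (Set.range fun i => B.submatrix eB e i) =
      (T : (q → K) →ₗ[K] (q' → K)) '' Set.range fun i => B i := by
    rw [← Set.range_comp, ← eB.surjective.range_comp]
    rfl
  ext w
  simp only [logicalWeights, Set.mem_ofPred_eq]
  rw [T.surjective.exists]
  refine exists_congr fun c => ?_
  have hT : T c = c ∘ e := rfl
  rw [rows_eq, Submodule.span_image, Submodule.mem_map_equiv, T.symm_apply_apply, hT,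
    hWt_comp_equiv, submatrix_mulVec_equiv, Function.comp_assoc, e.self_comp_symm,
    Function.comp_id]
  exact and_congr_left' (by simp [funext_iff, eA.forall_congr_left])

theorem distCSS_submatrix (HX : Matrix m1 q K) (HZ : Matrix m2 q K) (eX : m1' ≃ m1)
    (eZ : m2' ≃ m2) (e : q' ≃ q) :
    distCSS (HX.submatrix eX e) (HZ.submatrix eZ e) = distCSS HX HZ := by
  rw [distCSS_eq_sInf, distCSS_eq_sInf, logicalWeights_submatrix, logicalWeights_submatrix]

variable {α : Type*} [Fintype α] [DecidableEq α]

theorem logicalWeights_subset_blockDiagonal [Nonempty α] (A : Matrix m1 q K)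
    (B : Matrix m2 q K) :
    logicalWeights A B ⊆
      logicalWeights (blockDiagonal fun _ : α => A) (blockDiagonal fun _ : α => B) := by
  rintro _ ⟨c, hc, hcB, rfl⟩
  let k0 : α := Classical.arbitrary α
  refine ⟨blockExtend K k0 c, ?_, fun h => hcB ?_, (hWt_blockExtend k0 c).symm⟩
  · refine (blockDiagonal_mulVec_eq_zero_iff _ _).2 fun k => ?_
    rw [blockRestrict_blockExtend]
    split_ifs
    · exact hc
    · exact mulVec_zero A
  · simpa [blockRestrict_blockExtend] using (mem_span_rows_blockDiagonal_iff _ _).1 h k0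

theorem exists_le_of_mem_logicalWeights_blockDiagonal
    {A : Matrix m1 q K} {B : Matrix m2 q K} {w : ℕ}
    (hw : w ∈ logicalWeights (blockDiagonal fun _ : α => A) (blockDiagonal fun _ : α => B)) :
    ∃ w' ∈ logicalWeights A B, w' ≤ w := by
  obtain ⟨c, hc, hcB, rfl⟩ := hw
  obtain ⟨k, hk⟩ : ∃ k, blockRestrict K k c ∉ Submodule.span K (Set.range fun i => B i) := by
    by_contra! h
    exact hcB ((mem_span_rows_blockDiagonal_iff _ c).2 h)
  exact ⟨_, ⟨_, (blockDiagonal_mulVec_eq_zero_iff _ c).1 hc k, hk, rfl⟩,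
    hWt_blockRestrict_le k c⟩

theorem distCSS_blockDiagonal_const [Nonempty α]
    (HX : Matrix m1 q K) (HZ : Matrix m2 q K) :
    distCSS (blockDiagonal fun _ : α => HX) (blockDiagonal fun _ : α => HZ) = distCSS HX HZ := by
  rw [distCSS_eq_sInf, distCSS_eq_sInf]
  apply csInf_eq_csInf_of_forall_exists_le
  · rintro w (hw | hw)
    · obtain ⟨w', hw', hle⟩ := exists_le_of_mem_logicalWeights_blockDiagonal hw
      exact ⟨w', Or.inl hw', hle⟩
    · obtain ⟨w', hw', hle⟩ := exists_le_of_mem_logicalWeights_blockDiagonal hw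
      exact ⟨w', Or.inr hw', hle⟩
  · rintro w (hw | hw)
    · exact ⟨w, Or.inl (logicalWeights_subset_blockDiagonal HX HZ hw), le_rfl⟩
    · exact ⟨w, Or.inr (logicalWeights_subset_blockDiagonal HZ HX hw), le_rfl⟩

end Distance

theorem stmt_16_general (F : Type*) [Field F] (ℓ0 Δ ℓ : ℕ) [NeZero ℓ0] [NeZero ℓ]
    (hΔ : 1 < Δ) (hℓ : ℓ = ℓ0 * Δ) (a0 b0 : Polynomial F) (a b : Polynomial F)
    (ha : a = a0.comp (X ^ Δ)) (hb : b = b0.comp (X ^ Δ)) :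
    gbDim F ℓ a b = Δ * gbDim F ℓ0 a0 b0 ∧ gbDist F ℓ a b = gbDist F ℓ0 a0 b0 := by
  subst hℓ ha hb
  have : NeZero Δ := ⟨by omega⟩
  have hX := submatrix_GBHX_comp_X_pow F ℓ0 Δ a0 b0
  have hZ := submatrix_GBHZ_comp_X_pow F ℓ0 Δ a0 b0
  constructor
  · have rank_X := rank_submatrix (GBHX F (ℓ0 * Δ) (a0.comp (X ^ Δ)) (b0.comp (X ^ Δ)))
      finProdFinEquiv (sumProdDistribCongr finProdFinEquiv)
    have rank_Z := rank_submatrix (GBHZ F (ℓ0 * Δ) (a0.comp (X ^ Δ)) (b0.comp (X ^ Δ)))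
      finProdFinEquiv (sumProdDistribCongr finProdFinEquiv)
    rw [hX, rank_blockDiagonal_const, Fintype.card_fin] at rank_X
    rw [hZ, rank_blockDiagonal_const, Fintype.card_fin] at rank_Z
    rw [gbDim, gbDim, ← rank_X, ← rank_Z, Nat.mul_sub, Nat.mul_sub,
      show 2 * (ℓ0 * Δ) = Δ * (2 * ℓ0) by ring]
  · rw [gbDist, gbDist, ← distCSS_submatrix _ _ finProdFinEquiv finProdFinEquiv
      (sumProdDistribCongr finProdFinEquiv), hX, hZ, distCSS_blockDiagonal_const]

/-- Commensurate GB codes: if `a(x) = a₀(x^Δ)` and `b(x) = b₀(x^Δ)` with `ℓ = ℓ₀·Δ`,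
then `GB(a,b)` is a direct sum of `Δ` copies of `GB(a₀,b₀)`: the dimension satisfies
`k = Δ·k₀` and the minimum distance satisfies `d = d₀`. -/
theorem stmt_16 (F : Type*) [Field F] [Fintype F] (ℓ0 Δ ℓ : ℕ) [NeZero ℓ0] [NeZero ℓ]
    (hΔ : 1 < Δ) (hℓ : ℓ = ℓ0 * Δ) (a0 b0 : Polynomial F)
    (ha0 : a0.natDegree < ℓ0) (hb0 : b0.natDegree < ℓ0) (a b : Polynomial F)
    (ha : a = a0.comp (X ^ Δ)) (hb : b = b0.comp (X ^ Δ)) :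
    gbDim F ℓ a b = Δ * gbDim F ℓ0 a0 b0 ∧ gbDist F ℓ a b = gbDist F ℓ0 a0 b0 :=
  stmt_16_general F ℓ0 Δ ℓ hΔ hℓ a0 b0 a b ha hb
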